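/- Let G be a connected claw-free cubic graph and let H be a connected component of G - B(G) with at least 5 vertices. Then the set X of vertices of H having degree 2 in H is an independent set in G. -/

import Mathlib

/-!
Let `u, w ∈ H` be adjacent with `H`-degree `2`. Since `u` and `w` lie in one component of
`G - B(G)`, the edge `uw` is not a bridge; so `u` has a second `H`-neighbour `b` and a third
`G`-neighbour `a` with `ua` a bridge. A bridge lies in no triangle, so claw-freeness at `u`
forces `wb ∈ E(G)`, and `wb` is then not a bridge either: `uwb` is a triangle of `H`.
Only the third edge at `b` can leave `{u, w, b}` in `G - B(G)`; but `G - B(G)` has no bridges,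
and an edge that alone leaves a vertex set is a bridge. Hence `H = {u, w, b}`, too small.
-/

open SimpleGraph

/-- A graph is claw-free if it has no induced subgraph isomorphic to `K_{1,3}`. -/
def IsClawFree {V : Type*} (G : SimpleGraph V) : Prop :=
  ¬ ∃ v a b c : V, a ≠ b ∧ a ≠ c ∧ b ≠ c ∧
    G.Adj v a ∧ G.Adj v b ∧ G.Adj v c ∧ ¬ G.Adj a b ∧ ¬ G.Adj a c ∧ ¬ G.Adj b c

/-- `G - B(G)`: the graph obtained from `G` by deleting all of its bridges. -/
def bridgeFree {V : Type*} (G : SimpleGraph V) : SimpleGraph V :=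
  G.deleteEdges {e | G.IsBridge e}

namespace Set

variable {α : Type*} {s : Set α} {a b : α}

theorem eq_pair_of_ncard_eq_two (hs : s.ncard = 2) (ha : a ∈ s) (hb : b ∈ s) (hab : a ≠ b) :
    s = {a, b} :=
  (eq_of_subset_of_ncard_le (pair_subset ha hb) (by rw [hs, ncard_pair hab])
    (finite_of_ncard_ne_zero (by omega))).symm

theorem exists_subset_triple_of_ncard_eq_three (hs : s.ncard = 3) (ha : a ∈ s) (hb : b ∈ s)
    (hab : a ≠ b) : ∃ c, s ⊆ {a, b, c} := by
  have hfin : s.Finite := finite_of_ncard_ne_zero (by omega)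
  obtain ⟨c, hc⟩ : ∃ c, s \ {a, b} = {c} := by
    rw [← ncard_eq_one, ncard_sdiff' (pair_subset ha hb) hfin, hs, ncard_pair hab]
  refine ⟨c, fun z hz => ?_⟩
  by_cases hzab : z ∈ ({a, b} : Set α)
  · rcases hzab with rfl | rfl <;> simp
  · have : z ∈ s \ {a, b} := ⟨hz, hzab⟩
    rw [hc] at this
    simp [this]

theorem ncard_triple_le (a b c : α) : ({a, b, c} : Set α).ncard ≤ 3 :=
  (ncard_insert_le a _).trans (by grw [ncard_insert_le, ncard_singleton])

end Set

namespace SimpleGraph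

variable {V : Type*} {G : SimpleGraph V} {S : Set V} {u w x y z : V}

theorem Reachable.mem_of_forall_adj_mem (hS : ∀ x ∈ S, ∀ y, G.Adj x y → y ∈ S)
    (h : G.Reachable x y) (hx : x ∈ S) : y ∈ S := by
  by_contra hy
  obtain ⟨p⟩ := h
  obtain ⟨d, -, hd, hd'⟩ := p.exists_boundary_dart S hx hy
  exact hd' (hS _ hd _ d.adj)

theorem isBridge_of_forall_adj_notMem (hx : x ∈ S) (hy : y ∉ S)
    (hS : ∀ a ∈ S, ∀ c ∉ S, G.Adj a c → s(a, c) = s(x, y)) : G.IsBridge s(x, y) := by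
  rintro ⟨p⟩
  obtain ⟨d, -, hd, hd'⟩ := p.exists_boundary_dart S hx hy
  obtain ⟨hadj, hne⟩ := deleteEdges_adj.1 d.adj
  exact hne (hS _ hd _ hd' hadj)

theorem forall_adj_mem_of_forall_adj_notMem_eq (hG : ∀ ⦃x y⦄, G.Adj x y → ¬ G.IsBridge s(x, y))
    {e : Sym2 V} (hS : ∀ a ∈ S, ∀ c ∉ S, G.Adj a c → s(a, c) = e) :
    ∀ a ∈ S, ∀ c, G.Adj a c → c ∈ S := by
  intro a ha c hac
  by_contra hc
  exact hG hac <| isBridge_of_forall_adj_notMem ha hc fun a' ha' c' hc' h =>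
    (hS a' ha' c' hc' h).trans (hS a ha c hc hac).symm

theorem not_isBridge_of_adj_of_adj (hxy : G.Adj x y) (hyz : G.Adj y z) :
    ¬ G.IsBridge s(x, z) := by
  rw [isBridge_iff, not_not]
  by_cases hxz : x = z
  · subst hxz
    rfl
  have h1 : (G.deleteEdges {s(x, z)}).Adj x y := by
    simp [hxy, hyz.ne, hxz]
  have h2 : (G.deleteEdges {s(x, z)}).Adj y z := by
    simp [hyz, hxy.ne', Ne.symm hxz]
  exact h1.reachable.trans h2.reachable

theorem bridgeFree_adj : (bridgeFree G).Adj x y ↔ G.Adj x y ∧ ¬ G.IsBridge s(x, y) := by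
  simp [bridgeFree]

theorem Adj.bridgeFree_adj_of_reachable (hxy : G.Adj x y) (h : (bridgeFree G).Reachable x y) :
    (bridgeFree G).Adj x y :=
  bridgeFree_adj.2 ⟨hxy, fun hb => hb (h.mono (deleteEdges_anti (by simpa using hb)))⟩

/-- A cycle through a non-bridge consists of non-bridges, so it survives in `G - B(G)`. -/
theorem not_isBridge_bridgeFree (h : (bridgeFree G).Adj x y) :
    ¬ (bridgeFree G).IsBridge s(x, y) := by
  obtain ⟨hxy, hnb⟩ := bridgeFree_adj.1 h
  obtain ⟨u, c, hc, hxyc⟩ :=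
    adj_and_reachable_delete_edges_iff_exists_cycle.1 ⟨hxy, not_not.1 hnb⟩
  have hcB : ∀ e ∈ c.edges, e ∉ {e | G.IsBridge e} := fun e he hbr =>
    hbr.notMem_edges_of_isCycle hc he
  rw [isBridge_iff, not_not]
  exact (adj_and_reachable_delete_edges_iff_exists_cycle.2
    ⟨u, c.toDeleteEdges _ hcB, hc.toDeleteEdges G _ hcB, by simpa using hxyc⟩).2

theorem mem_of_bridgeFree_reachable_of_neighborSet_eq {b t : V}
    (hu : (bridgeFree G).neighborSet u = {w, b}) (hw : (bridgeFree G).neighborSet w = {u, b})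
    (hb : G.neighborSet b ⊆ {u, w, t}) (h : (bridgeFree G).Reachable u y) :
    y ∈ ({u, w, b} : Set V) := by
  refine h.mem_of_forall_adj_mem ?_ (by simp)
  refine forall_adj_mem_of_forall_adj_notMem_eq (fun _ _ => not_isBridge_bridgeFree)
    (e := s(b, t)) fun x hx y hy hxy => ?_
  simp only [Set.mem_insert_iff, Set.mem_singleton_iff, not_or] at hx hy
  rcases hx with rfl | rfl | rfl
  · have hy' : y ∈ ({w, b} : Set V) := hu ▸ hxy
    rcases hy' with rfl | rfl <;> simp at hy
  · have hy' : y ∈ ({u, b} : Set V) := hw ▸ hxy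
    rcases hy' with rfl | rfl <;> simp at hy
  · rcases hb (bridgeFree_adj.1 hxy).1 with rfl | rfl | rfl <;> simp at hy ⊢

end SimpleGraph

theorem IsClawFree.adj_of_isBridge {V : Type*} {G : SimpleGraph V} (hG : IsClawFree G)
    {v a b c : V} (ha : G.Adj v a) (hb : G.Adj v b) (hc : G.Adj v c) (hab : a ≠ b) (hac : a ≠ c)
    (hbc : b ≠ c) (hbr : G.IsBridge s(v, a)) : G.Adj b c := by
  by_contra h
  exact hG ⟨v, a, b, c, hab, hac, hbc, ha, hb, hc,
    fun hab' => not_isBridge_of_adj_of_adj hb hab'.symm hbr,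
    fun hac' => not_isBridge_of_adj_of_adj hc hac'.symm hbr, h⟩

theorem IsClawFree.exists_bridgeFree_neighborSet_eq_pair {V : Type*} {G : SimpleGraph V}
    (hG : IsClawFree G) {u w : V} (hdeg : (G.neighborSet u).ncard = 3)
    (huw : (bridgeFree G).Adj u w) (hdu : ((bridgeFree G).neighborSet u).ncard = 2)
    (hdw : ((bridgeFree G).neighborSet w).ncard = 2) :
    ∃ b, G.Adj u b ∧ G.Adj w b ∧
      (bridgeFree G).neighborSet u = {w, b} ∧ (bridgeFree G).neighborSet w = {u, b} := by
  obtain ⟨b, hub, hbw⟩ := ((bridgeFree G).neighborSet u).exists_ne_of_one_lt_ncard (by omega) w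
  have hGub : G.Adj u b := (bridgeFree_adj.1 hub).1
  obtain ⟨a, hua, hua'⟩ := Set.exists_mem_notMem_of_ncard_lt_ncard
    (s := (bridgeFree G).neighborSet u) (t := G.neighborSet u) (by omega)
    (Set.finite_of_ncard_ne_zero (by omega))
  have hbr : G.IsBridge s(u, a) := not_not.1 fun h => hua' (bridgeFree_adj.2 ⟨hua, h⟩)
  have hGwb : G.Adj w b := hG.adj_of_isBridge hua (bridgeFree_adj.1 huw).1 hGub
    (fun h => hua' (h ▸ huw)) (fun h => hua' (h ▸ hub)) hbw.symm hbr
  have hwb : (bridgeFree G).Adj w b :=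
    bridgeFree_adj.2 ⟨hGwb, not_isBridge_of_adj_of_adj (bridgeFree_adj.1 huw.symm).1 hGub⟩
  exact ⟨b, hGub, hGwb, Set.eq_pair_of_ncard_eq_two hdu huw hub hbw.symm,
    Set.eq_pair_of_ncard_eq_two hdw huw.symm hwb hGub.ne⟩

theorem degree_two_vertices_independent_general {V : Type*} [Fintype V]
    (G : SimpleGraph V) [DecidableRel G.Adj]
    (hcubic : ∀ x : V, G.degree x = 3) (hclawfree : IsClawFree G)
    (v : V) (hcard : 5 ≤ ((bridgeFree G).connectedComponentMk v).supp.ncard) :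
    ∀ u w : V, u ∈ ((bridgeFree G).connectedComponentMk v).supp →
      w ∈ ((bridgeFree G).connectedComponentMk v).supp → u ≠ w →
      ((bridgeFree G).neighborSet u).ncard = 2 →
      ((bridgeFree G).neighborSet w).ncard = 2 → ¬ G.Adj u w := by
  intro u w hu hw huw hdu hdw hadj
  set C := (bridgeFree G).connectedComponentMk v
  have hdeg (x : V) : (G.neighborSet x).ncard = 3 := by
    rw [← coe_neighborFinset, Set.ncard_coe_finset, card_neighborFinset_eq_degree, hcubic]
  have hBuw := hadj.bridgeFree_adj_of_reachable (C.reachable_of_mem_supp hu hw)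
  obtain ⟨b, hub, hwb, hNu, hNw⟩ :=
    hclawfree.exists_bridgeFree_neighborSet_eq_pair (hdeg u) hBuw hdu hdw
  obtain ⟨t, ht⟩ := Set.exists_subset_triple_of_ncard_eq_three (hdeg b) hub.symm hwb.symm huw
  have hsupp : C.supp ⊆ {u, w, b} := fun y hy =>
    mem_of_bridgeFree_reachable_of_neighborSet_eq hNu hNw ht (C.reachable_of_mem_supp hu hy)
  have := (Set.ncard_le_ncard hsupp).trans (Set.ncard_triple_le u w b)
  omega

/-- Let `G` be a connected claw-free cubic graph and let `H` be a connected component of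
`G - B(G)` with at least `5` vertices. Then the vertices of `H` having degree `2` in `H`
form an independent set in `G`. -/
theorem degree_two_vertices_independent {V : Type*} [Fintype V] [DecidableEq V]
    (G : SimpleGraph V) [DecidableRel G.Adj]
    (hconn : G.Connected) (hcubic : ∀ x : V, G.degree x = 3) (hclawfree : IsClawFree G)
    (v : V) (hcard : 5 ≤ ((bridgeFree G).connectedComponentMk v).supp.ncard) :
    ∀ u w : V, u ∈ ((bridgeFree G).connectedComponentMk v).supp →
      w ∈ ((bridgeFree G).connectedComponentMk v).supp → u ≠ w →
      ((bridgeFree G).neighborSet u).ncard = 2 →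
      ((bridgeFree G).neighborSet w).ncard = 2 → ¬ G.Adj u w :=
  degree_two_vertices_independent_general G hcubic hclawfree v hcard
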